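/- arXiv:2207.02748 — 2 statements merged into one kernel-verified Lean document; each statement's English description precedes it below -/
import Mathlib

section
/- Let S be an Archimedean semiring of a commutative unital ℝ-algebra A and let C be an S-module. Then C† = {a ∈ A : a + ε·1 ∈ C for all ε > 0} is an Archimedean quadratic module of A. -/
/-!
`C†` is a unital cone containing `C ⊇ S`, hence Archimedean; what needs work is `a² q ∈ C†`.

First, squares lie in `S†`. If `l ± a ∈ S`, put `u = l - a`, `v = l + a`. By a Pólya-type
certificate, `(n+2)(u+v)^(n+2) - 4(n+1)uv(u+v)^n` has nonnegative coefficients as a form in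
`u, v` (this is `4(j+1)(n+1-j) ≤ (n+2)²`), so it lies in `S`; since `u + v = 2l` and
`uv = l² - a²` it equals `4(n+1)(2l)^n (a² + l²/(n+1))`.

Second, `S† C† ⊆ C†`: with Archimedean bounds `s ≤ l`, `q ≤ m`,
`(s+δ)(q+δ) + δ(m-q) + δ(l-s) = sq + δ(δ+m+l)`, and the left side lies in `C`.
-/

open Finset

section

variable {A : Type*} [CommRing A] [Algebra ℝ A]

structure IsUnitalCone (C : Set A) : Prop where
  one_mem : (1 : A) ∈ C
  add_mem : ∀ x ∈ C, ∀ y ∈ C, x + y ∈ C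
  smul_mem : ∀ r : ℝ, 0 ≤ r → ∀ x ∈ C, r • x ∈ C

structure IsConeSemiring (S : Set A) : Prop extends IsUnitalCone S where
  mul_mem : ∀ x ∈ S, ∀ y ∈ S, x * y ∈ S

def IsArchimedeanCone (S : Set A) : Prop :=
  ∀ a : A, ∃ l : ℝ, 0 < l ∧ l • (1 : A) - a ∈ S ∧ l • (1 : A) + a ∈ S

def dagger (C : Set A) : Set A :=
  {a : A | ∀ ε : ℝ, 0 < ε → a + ε • (1 : A) ∈ C}

theorem IsArchimedeanCone.mono {S T : Set A} (hS : IsArchimedeanCone S) (hST : S ⊆ T) :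
    IsArchimedeanCone T :=
  fun a => (hS a).imp fun _ ⟨hl, hsub, hadd⟩ => ⟨hl, hST hsub, hST hadd⟩

namespace IsUnitalCone

variable {C : Set A}

theorem sum_smul_mem (hC : IsUnitalCone C) {ι : Type*} (s : Finset ι) {c : ι → ℝ} {f : ι → A}
    (hc : ∀ i ∈ s, 0 ≤ c i) (hf : ∀ i ∈ s, f i ∈ C) : ∑ i ∈ s, c i • f i ∈ C := by
  classical
  induction s using Finset.induction_on with
  | empty => simpa using hC.smul_mem 0 le_rfl 1 hC.one_mem
  | insert i s hi ih =>
    rw [sum_insert hi]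
    exact hC.add_mem _ (hC.smul_mem _ (hc i (mem_insert_self i s)) _ (hf i (mem_insert_self i s)))
      _ (ih (fun j hj => hc j (mem_insert_of_mem hj)) fun j hj => hf j (mem_insert_of_mem hj))

theorem add_smul_one_mem_of_le (hC : IsUnitalCone C) {x : A} {r ε : ℝ}
    (hx : x + r • (1 : A) ∈ C) (hrε : r ≤ ε) : x + ε • (1 : A) ∈ C := by
  have h := hC.add_mem _ hx _ (hC.smul_mem (ε - r) (sub_nonneg.2 hrε) 1 hC.one_mem)
  rwa [add_assoc, ← add_smul, add_sub_cancel] at h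

theorem subset_dagger (hC : IsUnitalCone C) : C ⊆ dagger C :=
  fun _ hx ε hε => hC.add_mem _ hx _ (hC.smul_mem ε hε.le 1 hC.one_mem)

theorem one_mem_dagger (hC : IsUnitalCone C) : (1 : A) ∈ dagger C :=
  hC.subset_dagger hC.one_mem

theorem add_mem_dagger (hC : IsUnitalCone C) :
    ∀ x ∈ dagger C, ∀ y ∈ dagger C, x + y ∈ dagger C := by
  intro x hx y hy ε hε
  have h := hC.add_mem _ (hx (ε / 2) (half_pos hε)) _ (hy (ε / 2) (half_pos hε))
  convert h using 1
  module

theorem smul_mem_dagger (hC : IsUnitalCone C) :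
    ∀ r : ℝ, 0 ≤ r → ∀ x ∈ dagger C, r • x ∈ dagger C := by
  intro r hr x hx ε hε
  rcases hr.eq_or_lt with rfl | hr
  · simpa using hC.smul_mem ε hε.le 1 hC.one_mem
  · convert hC.smul_mem r hr.le _ (hx (ε / r) (div_pos hε hr)) using 1
    rw [smul_add, smul_smul, mul_div_cancel₀ _ hr.ne']

end IsUnitalCone

theorem subset_of_mul_mem {M : Type*} [MulOneClass M] {S C : Set M} (hC : (1 : M) ∈ C)
    (hSC : ∀ s ∈ S, ∀ c ∈ C, s * c ∈ C) : S ⊆ C :=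
  fun s hs => by simpa using hSC s hs 1 hC

namespace IsConeSemiring

variable {S : Set A}

theorem pow_mem (hS : IsConeSemiring S) {x : A} (hx : x ∈ S) (k : ℕ) : x ^ k ∈ S := by
  induction k with
  | zero => simpa using hS.one_mem
  | succ k ih => rw [pow_succ]; exact hS.mul_mem _ ih _ hx

end IsConeSemiring

theorem four_mul_succ_mul_choose_le (n j : ℕ) (hj : j ≤ n) :
    4 * (n + 1) * n.choose j ≤ (n + 2) * (n + 2).choose (j + 1) := by
  obtain ⟨k, rfl⟩ := Nat.exists_eq_add_of_le hj
  have h1 := Nat.add_one_mul_choose_eq (j + k) j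
  have h2 := Nat.choose_mul_succ_eq (j + k + 1) (j + 1)
  rw [show j + k + 1 + 1 - (j + 1) = k + 1 by omega] at h2
  have hamgm : 4 * ((j + 1) * (k + 1)) ≤ (j + k + 2) ^ 2 := by nlinarith [sq_nonneg ((j : ℤ) - k)]
  refine le_of_mul_le_mul_right (a := (j + 1) * (k + 1)) ?_ (by positivity)
  calc 4 * (j + k + 1) * (j + k).choose j * ((j + 1) * (k + 1))
      = 4 * ((j + 1) * (k + 1)) * ((j + k + 1) * (j + k).choose j) := by ring
    _ ≤ (j + k + 2) ^ 2 * ((j + k + 1) * (j + k).choose j) := by gcongr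
    _ = (j + k + 2) * (j + 1) * ((j + k + 1).choose (j + 1) * (j + k + 1 + 1)) := by rw [h1]; ring
    _ = (j + k + 2) * (j + k + 2).choose (j + 1) * ((j + 1) * (k + 1)) := by rw [h2]; ring

theorem polya_identity (u v : A) (n : ℕ) :
    ((n : ℝ) + 2) • (u + v) ^ (n + 2) - (4 * ((n : ℝ) + 1)) • (u * v * (u + v) ^ n) =
      ∑ j ∈ range (n + 1), (((n : ℝ) + 2) * (n + 2).choose (j + 1) - 4 * ((n : ℝ) + 1) * n.choose j)
        • (u ^ (j + 1) * v ^ (n + 1 - j)) + ((n : ℝ) + 2) • (u ^ (n + 2) + v ^ (n + 2)) := by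
  have hbig : (u + v) ^ (n + 2) =
      ∑ i ∈ range (n + 3), ((n + 2).choose i : ℝ) • (u ^ i * v ^ (n + 2 - i)) := by
    rw [add_pow]
    refine sum_congr rfl fun i _ => ?_
    rw [Nat.cast_smul_eq_nsmul, nsmul_eq_mul, mul_comm]
  have hsmall : u * v * (u + v) ^ n =
      ∑ j ∈ range (n + 1), (n.choose j : ℝ) • (u ^ (j + 1) * v ^ (n + 1 - j)) := by
    rw [add_pow, mul_sum]
    refine sum_congr rfl fun j hj => ?_
    have hj : j ≤ n := Nat.lt_succ_iff.1 (mem_range.1 hj)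
    rw [Nat.cast_smul_eq_nsmul, nsmul_eq_mul, show n + 1 - j = n - j + 1 by omega]
    ring
  rw [hbig, hsmall, sum_range_succ, sum_range_succ']
  simp only [sub_smul, mul_smul, sum_sub_distrib, smul_sum, smul_add, Nat.reduceSubDiff,
    Nat.choose_zero_right, Nat.choose_self, Nat.cast_one, pow_zero, tsub_zero, tsub_self, one_mul,
    mul_one, one_smul]
  abel

theorem IsConeSemiring.polya_mem {S : Set A} (hS : IsConeSemiring S) {u v : A} (hu : u ∈ S)
    (hv : v ∈ S) (n : ℕ) :
    ((n : ℝ) + 2) • (u + v) ^ (n + 2) - (4 * ((n : ℝ) + 1)) • (u * v * (u + v) ^ n) ∈ S := by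
  have hcoeff : ∀ j ∈ range (n + 1),
      0 ≤ ((n : ℝ) + 2) * (n + 2).choose (j + 1) - 4 * ((n : ℝ) + 1) * n.choose j := by
    intro j hj
    rw [sub_nonneg]
    exact_mod_cast four_mul_succ_mul_choose_le n j (Nat.lt_succ_iff.1 (mem_range.1 hj))
  rw [polya_identity]
  refine hS.add_mem _ (hS.sum_smul_mem _ hcoeff fun j _ => ?_) _ (hS.smul_mem _ (by positivity) _
    (hS.add_mem _ (hS.pow_mem hu _) _ (hS.pow_mem hv _)))
  exact hS.mul_mem _ (hS.pow_mem hu _) _ (hS.pow_mem hv _)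

theorem IsConeSemiring.sq_add_smul_one_mem {S : Set A} (hS : IsConeSemiring S) {a : A} {l : ℝ}
    (hl : 0 < l) (hsub : l • (1 : A) - a ∈ S) (hadd : l • (1 : A) + a ∈ S) (n : ℕ) :
    a ^ 2 + (l ^ 2 / ((n : ℝ) + 1)) • (1 : A) ∈ S := by
  have hc : 0 < 4 * ((n : ℝ) + 1) * (2 * l) ^ n := by positivity
  have hpolya := hS.polya_mem hsub hadd n
  have hscalar :
      4 * ((n : ℝ) + 1) * (2 * l) ^ n * (l ^ 2 / ((n : ℝ) + 1)) = 4 * (2 * l) ^ n * l ^ 2 := by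
    field_simp
  have hcert : ((n : ℝ) + 2) • (l • (1 : A) - a + (l • 1 + a)) ^ (n + 2)
      - (4 * ((n : ℝ) + 1)) •
          ((l • (1 : A) - a) * (l • 1 + a) * (l • (1 : A) - a + (l • 1 + a)) ^ n)
      = (4 * ((n : ℝ) + 1) * (2 * l) ^ n) • (a ^ 2 + (l ^ 2 / ((n : ℝ) + 1)) • (1 : A)) := by
    rw [smul_add, smul_smul, hscalar]
    simp only [Algebra.smul_def, map_mul, map_add, map_pow, map_ofNat, map_natCast, map_one,
      mul_one]
    ring
  rw [hcert] at hpolya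
  simpa only [inv_smul_smul₀ hc.ne'] using hS.smul_mem _ (inv_nonneg.2 hc.le) _ hpolya

theorem IsConeSemiring.sq_mem_dagger {S : Set A} (hS : IsConeSemiring S)
    (harch : IsArchimedeanCone S) (a : A) : a ^ 2 ∈ dagger S := by
  intro ε hε
  obtain ⟨l, hl, hsub, hadd⟩ := harch a
  obtain ⟨n, hn⟩ := exists_nat_gt (l ^ 2 / ε)
  refine hS.add_smul_one_mem_of_le (hS.sq_add_smul_one_mem hl hsub hadd n) ?_
  rw [div_le_iff₀ (by positivity)]
  rw [div_lt_iff₀ hε] at hn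
  nlinarith

theorem exists_pos_mul_add_le {ε : ℝ} (hε : 0 < ε) {c : ℝ} (hc : 0 ≤ c) :
    ∃ δ : ℝ, 0 < δ ∧ δ * (δ + c) ≤ ε := by
  refine ⟨min 1 (ε / (1 + c)), lt_min one_pos (by positivity), ?_⟩
  calc min 1 (ε / (1 + c)) * (min 1 (ε / (1 + c)) + c)
      ≤ ε / (1 + c) * (1 + c) := by gcongr <;> simp
    _ = ε := div_mul_cancel₀ ε (by positivity)

theorem mul_mem_dagger {S C : Set A} (hC : IsUnitalCone C) (harch : IsArchimedeanCone S)
    (hSC : ∀ s ∈ S, ∀ c ∈ C, s * c ∈ C) {s q : A} (hs : s ∈ dagger S) (hq : q ∈ dagger C) :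
    s * q ∈ dagger C := by
  intro ε hε
  have hSsubC := subset_of_mul_mem hC.one_mem hSC
  obtain ⟨l, hl, hls, -⟩ := harch s
  obtain ⟨m, hm, hmq, -⟩ := harch q
  obtain ⟨δ, hδ, hδε⟩ := exists_pos_mul_add_le hε (by positivity : 0 ≤ m + l)
  refine hC.add_smul_one_mem_of_le ?_ (by linarith : δ * (δ + m + l) ≤ ε)
  have hsplit : (s + δ • (1 : A)) * (q + δ • 1) + δ • (m • (1 : A) - q) + δ • (l • (1 : A) - s)
      = s * q + (δ * (δ + m + l)) • (1 : A) := by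
    simp only [Algebra.smul_def, map_mul, map_add, mul_one]
    ring
  rw [← hsplit]
  exact hC.add_mem _ (hC.add_mem _ (hSC _ (hs δ hδ) _ (hq δ hδ)) _
    (hC.smul_mem δ hδ.le _ (hSsubC hmq))) _ (hC.smul_mem δ hδ.le _ (hSsubC hls))

end

theorem stmt_7 {A : Type*} [CommRing A] [Algebra ℝ A] (S C : Set A)
    (hSone : (1 : A) ∈ S)
    (hSadd : ∀ x ∈ S, ∀ y ∈ S, x + y ∈ S)
    (hSsmul : ∀ r : ℝ, 0 ≤ r → ∀ x ∈ S, r • x ∈ S)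
    (hSmul : ∀ x ∈ S, ∀ y ∈ S, x * y ∈ S)
    (harch : ∀ a : A, ∃ l : ℝ, 0 < l ∧ l • (1 : A) - a ∈ S ∧ l • (1 : A) + a ∈ S)
    (hCone : (1 : A) ∈ C)
    (hCadd : ∀ x ∈ C, ∀ y ∈ C, x + y ∈ C)
    (hCsmul : ∀ r : ℝ, 0 ≤ r → ∀ x ∈ C, r • x ∈ C)
    (hSC : ∀ s ∈ S, ∀ c ∈ C, s * c ∈ C) :
    (let Cd : Set A := {a : A | ∀ ε : ℝ, 0 < ε → a + ε • (1 : A) ∈ C}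
     (1 : A) ∈ Cd ∧ (∀ x ∈ Cd, ∀ y ∈ Cd, x + y ∈ Cd) ∧
       (∀ r : ℝ, 0 ≤ r → ∀ x ∈ Cd, r • x ∈ Cd) ∧
       (∀ a : A, ∀ q ∈ Cd, a ^ 2 * q ∈ Cd) ∧
       (∀ a : A, ∃ l : ℝ, 0 < l ∧ l • (1 : A) - a ∈ Cd ∧ l • (1 : A) + a ∈ Cd)) := by
  have hS : IsConeSemiring S := ⟨⟨hSone, hSadd, hSsmul⟩, hSmul⟩
  have hC : IsUnitalCone C := ⟨hCone, hCadd, hCsmul⟩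
  exact ⟨hC.one_mem_dagger, hC.add_mem_dagger, hC.smul_mem_dagger,
    fun a _ hq => mul_mem_dagger hC harch hSC (hS.sq_mem_dagger harch a) hq,
    IsArchimedeanCone.mono harch ((subset_of_mul_mem hCone hSC).trans hC.subset_dagger)⟩
end

section
/- Let G be a subset of the space of affine-linear polynomials on ℝ^d and let S(G) be the semiring of ℝ[x_1,...,x_d] generated by G. If K(G) = {t ∈ ℝ^d : g(t) ≥ 0 for all g ∈ G} is non-empty and compact, then S(G) is Archimedean. -/
/-!
The elements `p` admitting some `l` with `l ± p ∈ S(G)` form an `ℝ`-subalgebra, because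
`½ ((l - p) (m + q) + (l + p) (m - q)) = l m - p q`; so it suffices to bound each coordinate
`X i`, and since `K(G)` is compact, `R ± X i` is nonnegative on it for some `R`.

Affine polynomials are encoded by coefficient vectors in `ℝ × ℝᵈ`, and there an affine `p ≥ 0`
on `K(G)` lies in the closure of the cone spanned by `1` and `G`: a functional separating `p`
from that closed cone is nonnegative on `1` and on `G`, so it is a nonnegative multiple of
evaluation at a point of `K(G)` (if it has no constant part, its linear part is a recession
direction of `K(G)`, hence zero). Finally `1` is an interior point of the cone, since every
vector near `1` is positive on the compact `K(G)`, and so `p + 1` lies in the cone itself.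
-/

open MvPolynomial

/-- The semiring (preprime) of `ℝ[x_1,…,x_d]` generated by a set `G`:
the smallest subset containing `G ∪ {1}` that is closed under addition,
multiplication and multiplication by nonnegative real scalars. -/
def semiringGen {A : Type*} [CommRing A] [Algebra ℝ A] (G : Set A) : Set A :=
  ⋂₀ {S : Set A | (1 : A) ∈ S ∧ G ⊆ S ∧ (∀ x ∈ S, ∀ y ∈ S, x + y ∈ S) ∧
    (∀ x ∈ S, ∀ y ∈ S, x * y ∈ S) ∧ (∀ r : ℝ, 0 ≤ r → ∀ x ∈ S, r • x ∈ S)}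

section semiringGen

variable {A : Type*} [CommRing A] [Algebra ℝ A] {G : Set A} {x y : A}

lemma one_mem_semiringGen : (1 : A) ∈ semiringGen G :=
  Set.mem_sInter.2 fun _ hS ↦ hS.1

lemma subset_semiringGen : G ⊆ semiringGen G :=
  fun _ hx ↦ Set.mem_sInter.2 fun _ hS ↦ hS.2.1 hx

lemma add_mem_semiringGen (hx : x ∈ semiringGen G) (hy : y ∈ semiringGen G) :
    x + y ∈ semiringGen G :=
  Set.mem_sInter.2 fun S hS ↦ hS.2.2.1 x (hx S hS) y (hy S hS)

lemma mul_mem_semiringGen (hx : x ∈ semiringGen G) (hy : y ∈ semiringGen G) :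
    x * y ∈ semiringGen G :=
  Set.mem_sInter.2 fun S hS ↦ hS.2.2.2.1 x (hx S hS) y (hy S hS)

lemma smul_mem_semiringGen {r : ℝ} (hr : 0 ≤ r) (hx : x ∈ semiringGen G) :
    r • x ∈ semiringGen G :=
  Set.mem_sInter.2 fun S hS ↦ hS.2.2.2.2 r hr x (hx S hS)

variable (G) in
def boundedSubalgebra : Subalgebra ℝ A where
  carrier := {p | ∃ l : ℝ, 0 < l ∧ l • 1 - p ∈ semiringGen G ∧ l • 1 + p ∈ semiringGen G}
  algebraMap_mem' r := ⟨|r| + 1, by positivity, by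
    simp only [Algebra.algebraMap_eq_smul_one, ← sub_smul, ← add_smul]
    exact ⟨smul_mem_semiringGen (by linarith [le_abs_self r]) one_mem_semiringGen,
      smul_mem_semiringGen (by linarith [neg_abs_le r]) one_mem_semiringGen⟩⟩
  add_mem' := by
    rintro p q ⟨l, hl, hlp, hlp'⟩ ⟨m, hm, hmq, hmq'⟩
    refine ⟨l + m, by positivity, ?_, ?_⟩
    · convert add_mem_semiringGen hlp hmq using 1; module
    · convert add_mem_semiringGen hlp' hmq' using 1; module
  mul_mem' := by
    rintro p q ⟨l, hl, hlp, hlp'⟩ ⟨m, hm, hmq, hmq'⟩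
    have bound : ∀ q' : A, m • 1 - q' ∈ semiringGen G → m • 1 + q' ∈ semiringGen G →
        (l * m) • 1 - p * q' ∈ semiringGen G := fun q' h h' ↦ by
      have key : (l • 1 - p) * (m • 1 + q') + (l • 1 + p) * (m • 1 - q') =
          (2 : ℝ) • ((l * m) • 1 - p * q') := by
        simp only [Algebra.smul_def, mul_one, map_mul, map_ofNat]; ring
      have := smul_mem_semiringGen (inv_nonneg.2 zero_le_two)
        (add_mem_semiringGen (mul_mem_semiringGen hlp h') (mul_mem_semiringGen hlp' h))
      rwa [key, smul_smul, inv_mul_cancel₀ two_ne_zero, one_smul] at this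
    refine ⟨l * m, by positivity, bound q hmq hmq', ?_⟩
    simpa using bound (-q) (by simpa using hmq') (by simpa [← sub_eq_add_neg] using hmq)

end semiringGen

theorem Convex.interior_closure_eq_interior {V : Type*} [NormedAddCommGroup V]
    [NormedSpace ℝ V] [FiniteDimensional ℝ V] {s : Set V} (hs : Convex ℝ s) :
    interior (closure s) = interior s := by
  refine (interior_mono subset_closure).antisymm' fun x hx ↦ ?_
  have hspan : affineSpan ℝ s = ⊤ := by
    rw [← hs.closure.interior_nonempty_iff_affineSpan_eq_top.1 ⟨x, hx⟩]
    exact le_antisymm (affineSpan_mono ℝ subset_closure) (affineSpan_le.2 (closure_minimal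
      (subset_affineSpan ℝ s) (affineSpan ℝ s).closed_of_finiteDimensional))
  rwa [hs.interior_closure_eq_interior_of_nonempty_interior
    (hs.interior_nonempty_iff_affineSpan_eq_top.2 hspan)] at hx

theorem PointedCone.add_mem_of_mem_closure_of_mem_interior {E : Type*} [AddCommGroup E]
    [Module ℝ E] [TopologicalSpace E] [IsTopologicalAddGroup E] [ContinuousSMul ℝ E]
    (C : PointedCone ℝ E) {x y : E} (hx : x ∈ closure (C : Set E))
    (hy : y ∈ interior (C : Set E)) :
    x + y ∈ C := by
  have := C.convex.combo_closure_interior_mem_interior hx hy (a := 1 / 2) (b := 1 / 2)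
    (by norm_num) (by norm_num) (by norm_num)
  convert C.smul_mem zero_le_two (interior_subset this) using 1
  module

theorem Bornology.IsBounded.eq_zero_of_forall_add_smul_mem {E : Type*} [NormedAddCommGroup E]
    [NormedSpace ℝ E] {K : Set E} (hK : Bornology.IsBounded K) {x v : E}
    (hv : ∀ s : ℝ, 0 ≤ s → x + s • v ∈ K) : v = 0 := by
  obtain ⟨R, hR⟩ := isBounded_iff_forall_norm_le.1 hK
  have hx : ‖x‖ ≤ R := by simpa using hR _ (hv 0 le_rfl)
  by_contra hv0
  have hpos : 0 < ‖v‖ := norm_pos_iff.2 hv0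
  have hs : 0 ≤ (2 * R + 1) / ‖v‖ := div_nonneg (by linarith [norm_nonneg x]) hpos.le
  have hsv : ‖((2 * R + 1) / ‖v‖) • v‖ = 2 * R + 1 := by
    rw [norm_smul, Real.norm_of_nonneg hs, div_mul_cancel₀ _ hpos.ne']
  have := norm_sub_le (x + ((2 * R + 1) / ‖v‖) • v) x
  rw [add_sub_cancel_left, hsv] at this
  linarith [hR _ (hv _ hs)]

theorem LinearMap.exists_eq_fst_add_sum {d : ℕ} (L : (ℝ × (Fin d → ℝ)) →ₗ[ℝ] ℝ) :
    ∃ (a : ℝ) (b : Fin d → ℝ), ∀ v, L v = v.1 * a + ∑ i, v.2 i * b i := by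
  refine ⟨L (1, 0), fun i ↦ L (0, Pi.single i 1), fun v ↦ ?_⟩
  have hv : v = v.1 • ((1 : ℝ), (0 : Fin d → ℝ)) +
      ∑ i, v.2 i • ((0 : ℝ), Pi.single i (1 : ℝ)) := by
    ext
    · simp [Prod.fst_sum]
    · simp [Prod.snd_sum, Pi.single_apply]
  conv_lhs => rw [hv, map_add, map_smul, map_sum]
  simp only [map_smul, smul_eq_mul]

section affine

variable {d : ℕ}

variable (d) in
noncomputable def affinePoly : (ℝ × (Fin d → ℝ)) →ₗ[ℝ] MvPolynomial (Fin d) ℝ :=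
  (LinearMap.toSpanSingleton ℝ _ 1).coprod (Fintype.linearCombination ℝ X)

lemma affinePoly_apply (v : ℝ × (Fin d → ℝ)) :
    affinePoly d v = C v.1 + ∑ i, C (v.2 i) * X i := by
  simp [affinePoly, Fintype.linearCombination_apply, smul_eq_C_mul]

@[simp]
lemma affinePoly_one_zero : affinePoly d (1, 0) = 1 := by
  simp [affinePoly_apply]

lemma eval_affinePoly (t : Fin d → ℝ) (v : ℝ × (Fin d → ℝ)) :
    eval t (affinePoly d v) = v.1 + ∑ i, v.2 i * t i := by
  simp [affinePoly_apply]

lemma mem_range_affinePoly {p : MvPolynomial (Fin d) ℝ} (hp : p.totalDegree ≤ 1) :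
    p ∈ LinearMap.range (affinePoly d) := by
  rw [p.as_sum]
  refine Submodule.sum_mem _ fun n hn ↦ ?_
  have hn1 : n.sum (fun _ e ↦ e) ≤ 1 := (le_totalDegree hn).trans hp
  obtain hn0 | hn1 := Nat.le_one_iff_eq_zero_or_eq_one.1 hn1
  · obtain rfl := (Finsupp.degree_eq_zero_iff n).1 hn0
    exact ⟨(coeff 0 p, 0), by simp [affinePoly_apply]⟩
  · obtain ⟨i, rfl⟩ := (Finsupp.sum_eq_one_iff n).1 hn1
    refine ⟨(0, Pi.single i (coeff (Finsupp.single i 1) p)), ?_⟩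
    simp [affinePoly, Fintype.linearCombination_apply_single, smul_eq_C_mul, C_mul_X_eq_monomial]

variable (G : Set (MvPolynomial (Fin d) ℝ))

def nonnegSet : Set (Fin d → ℝ) := {t | ∀ g ∈ G, 0 ≤ eval t g}

noncomputable def affineCone : PointedCone ℝ (ℝ × (Fin d → ℝ)) :=
  PointedCone.hull ℝ (insert (1, 0) (affinePoly d ⁻¹' G))

variable {G}

lemma affinePoly_mem_semiringGen {v : ℝ × (Fin d → ℝ)} (hv : v ∈ affineCone G) :
    affinePoly d v ∈ semiringGen G := by
  induction hv using Submodule.span_induction with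
  | mem v hv =>
    obtain rfl | hv := hv
    · simpa using one_mem_semiringGen
    · exact subset_semiringGen hv
  | zero => simpa using smul_mem_semiringGen le_rfl (one_mem_semiringGen (G := G))
  | add v w _ _ hv hw => simpa using add_mem_semiringGen hv hw
  | smul c v _ hv => simpa using smul_mem_semiringGen c.2 hv

lemma exists_mem_nonnegSet_eq_smul_eval (hG : ∀ g ∈ G, g.totalDegree ≤ 1)
    (hKne : (nonnegSet G).Nonempty) (hKb : Bornology.IsBounded (nonnegSet G))
    (L : (ℝ × (Fin d → ℝ)) →ₗ[ℝ] ℝ) (hL : ∀ v ∈ affineCone G, 0 ≤ L v) :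
    ∃ t ∈ nonnegSet G, ∃ a : ℝ, 0 ≤ a ∧ ∀ v, L v = a * eval t (affinePoly d v) := by
  obtain ⟨a, b, hLab⟩ := L.exists_eq_fst_add_sum
  have hLG : ∀ g ∈ G, ∃ v, affinePoly d v = g ∧ 0 ≤ L v := fun g hg ↦
    let ⟨v, hv⟩ := mem_range_affinePoly (hG g hg)
    ⟨v, hv, hL v (PointedCone.subset_hull (Set.mem_insert_of_mem _ (by simpa [hv])))⟩
  have ha : 0 ≤ a := by simpa [hLab] using hL _ (PointedCone.subset_hull (Set.mem_insert _ _))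
  obtain ha | rfl := ha.lt_or_eq
  · have hLt : ∀ v, L v = a * eval (a⁻¹ • b) (affinePoly d v) := fun v ↦ by
      rw [hLab, eval_affinePoly, mul_add, Finset.mul_sum, mul_comm a]
      congr 1
      exact Finset.sum_congr rfl fun i _ ↦ by simp [field]
    refine ⟨a⁻¹ • b, fun g hg ↦ ?_, a, ha.le, hLt⟩
    obtain ⟨v, rfl, hv⟩ := hLG g hg
    exact (mul_nonneg_iff_of_pos_left ha).1 (hLt v ▸ hv)
  · obtain ⟨t, ht⟩ := hKne
    have hb : b = 0 := hKb.eq_zero_of_forall_add_smul_mem (x := t) fun s hs g hg ↦ by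
      obtain ⟨v, rfl, hv⟩ := hLG g hg
      have : eval (t + s • b) (affinePoly d v) = eval t (affinePoly d v) + s * L v := by
        simp only [eval_affinePoly, hLab, Pi.add_apply, Pi.smul_apply, smul_eq_mul, mul_add,
          Finset.sum_add_distrib, Finset.mul_sum, mul_zero, zero_add, add_assoc]
        exact congrArg _ (congrArg _ (Finset.sum_congr rfl fun i _ ↦ by ring))
      rw [this]
      exact add_nonneg (ht _ hg) (mul_nonneg hs hv)
    exact ⟨t, ht, 0, le_rfl, fun v ↦ by simp [hLab, hb]⟩

lemma mem_closure_affineCone (hG : ∀ g ∈ G, g.totalDegree ≤ 1)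
    (hKne : (nonnegSet G).Nonempty) (hKb : Bornology.IsBounded (nonnegSet G))
    {v : ℝ × (Fin d → ℝ)} (hv : ∀ t ∈ nonnegSet G, 0 ≤ eval t (affinePoly d v)) :
    v ∈ closure (affineCone G : Set (ℝ × (Fin d → ℝ))) := by
  by_contra h
  obtain ⟨f, hf, hfv⟩ :=
    ProperCone.hyperplane_separation_point (Submodule.closure (affineCone G)) h
  obtain ⟨t, ht, a, ha, hfa⟩ := exists_mem_nonnegSet_eq_smul_eval hG hKne hKb f.toLinearMap
    fun w hw ↦ hf w (subset_closure hw)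
  exact hfv.not_ge (hfa v ▸ mul_nonneg ha (hv t ht))

lemma one_mem_interior_affineCone (hG : ∀ g ∈ G, g.totalDegree ≤ 1)
    (hKne : (nonnegSet G).Nonempty) (hKc : IsCompact (nonnegSet G)) :
    ((1 : ℝ), (0 : Fin d → ℝ)) ∈ interior (affineCone G : Set (ℝ × (Fin d → ℝ))) := by
  rw [← (affineCone G).convex.interior_closure_eq_interior, mem_interior_iff_mem_nhds]
  have hpos : ∀ᶠ v in nhds ((1 : ℝ), (0 : Fin d → ℝ)), ∀ t ∈ nonnegSet G,
      0 < eval t (affinePoly d v) := by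
    refine hKc.eventually_forall_of_forall_eventually fun t _ ↦ ?_
    have hcont : Continuous fun z : (ℝ × (Fin d → ℝ)) × (Fin d → ℝ) ↦
        eval z.2 (affinePoly d z.1) := by
      simp only [eval_affinePoly]; fun_prop
    exact continuousAt_const.eventually_lt hcont.continuousAt (by simp)
  exact Filter.mem_of_superset hpos fun v hv ↦
    mem_closure_affineCone hG hKne hKc.isBounded fun t ht ↦ (hv t ht).le

theorem add_one_mem_semiringGen (hG : ∀ g ∈ G, g.totalDegree ≤ 1)
    (hKne : (nonnegSet G).Nonempty) (hKc : IsCompact (nonnegSet G))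
    {p : MvPolynomial (Fin d) ℝ} (hp : p.totalDegree ≤ 1)
    (hpK : ∀ t ∈ nonnegSet G, 0 ≤ eval t p) :
    p + 1 ∈ semiringGen G := by
  obtain ⟨v, rfl⟩ := mem_range_affinePoly hp
  have := (affineCone G).add_mem_of_mem_closure_of_mem_interior
    (mem_closure_affineCone hG hKne hKc.isBounded hpK) (one_mem_interior_affineCone hG hKne hKc)
  simpa using affinePoly_mem_semiringGen this

theorem X_mem_boundedSubalgebra (hG : ∀ g ∈ G, g.totalDegree ≤ 1)
    (hKne : (nonnegSet G).Nonempty) (hKc : IsCompact (nonnegSet G)) (i : Fin d) :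
    X i ∈ boundedSubalgebra G := by
  obtain ⟨R, hR⟩ := isBounded_iff_forall_norm_le.1 hKc.isBounded
  obtain ⟨t₀, ht₀⟩ := hKne
  have hcoord : ∀ t ∈ nonnegSet G, |t i| ≤ R := fun t ht ↦
    (Real.norm_eq_abs _ ▸ norm_le_pi_norm t i).trans (hR t ht)
  refine ⟨R + 1, by linarith [norm_nonneg t₀, hR t₀ ht₀], ?_, ?_⟩
  · have h := add_one_mem_semiringGen hG ⟨t₀, ht₀⟩ hKc (p := C R - X i)
      ((totalDegree_sub _ _).trans (max_le (by simp) (by simp))) fun t ht ↦ by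
        simp only [eval_sub, eval_C, eval_X]; linarith [(abs_le.1 (hcoord t ht)).2]
    rwa [add_smul, one_smul, smul_eq_C_mul, mul_one, ← sub_add_eq_add_sub]
  · have h := add_one_mem_semiringGen hG ⟨t₀, ht₀⟩ hKc (p := C R + X i)
      ((totalDegree_add _ _).trans (max_le (by simp) (by simp))) fun t ht ↦ by
        simp only [eval_add, eval_C, eval_X]; linarith [(abs_le.1 (hcoord t ht)).1]
    rwa [add_smul, one_smul, smul_eq_C_mul, mul_one, add_right_comm]

end affine

theorem stmt_11 (d : ℕ) (G : Set (MvPolynomial (Fin d) ℝ))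
    (hG : ∀ g ∈ G, g.totalDegree ≤ 1)
    (hKne : {t : Fin d → ℝ | ∀ g ∈ G, 0 ≤ eval t g}.Nonempty)
    (hKc : IsCompact {t : Fin d → ℝ | ∀ g ∈ G, 0 ≤ eval t g}) :
    ∀ p : MvPolynomial (Fin d) ℝ, ∃ l : ℝ, 0 < l ∧
      l • (1 : MvPolynomial (Fin d) ℝ) - p ∈ semiringGen G ∧
      l • (1 : MvPolynomial (Fin d) ℝ) + p ∈ semiringGen G := by
  have hX : Set.range X ⊆ (boundedSubalgebra G : Set (MvPolynomial (Fin d) ℝ)) :=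
    Set.range_subset_iff.2 (X_mem_boundedSubalgebra hG hKne hKc)
  intro p
  exact Algebra.adjoin_le hX (adjoin_range_X (R := ℝ) ▸ Algebra.mem_top)
end
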